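/- (Theorem 1, PEU upper bound.) Let D be a finite database of q-sequences and let t' be a proper extension-prefix of a sequence t. Then u(t) ≤ PEU(t'), where u(t) = Σ_{s∈D, t⊑s} u(t,s) and PEU(t') = Σ_{s∈D, t'⊑s} PEU(t',s). -/

import Mathlib

open scoped Classical

namespace TKUS

variable {I : Type*} [Fintype I] [LinearOrder I]

/-- `p` is the (0-based) position list of an instance of the sequence `t`
in the q-sequence `s`. -/
def IsInstance (s : List (I →₀ ℕ)) (t : List (Finset I)) (p : List ℕ) : Prop :=
  p.length = t.length ∧ p.Chain' (· < ·) ∧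
    ∀ v < t.length, p.getD v 0 < s.length ∧
      ∀ i ∈ t.getD v ∅, 0 < s.getD (p.getD v 0) 0 i

/-- `t ⊑ s` : `t` has at least one instance in `s`. -/
def Contains (s : List (I →₀ ℕ)) (t : List (Finset I)) : Prop :=
  ∃ p, IsInstance s t p

/-- `u(t,p,s)` : utility of `t` at position `p` in `s`. -/
def uPos (eu : I → ℝ) (s : List (I →₀ ℕ)) (t : List (Finset I)) (p : List ℕ) : ℝ :=
  ∑ v ∈ Finset.range t.length, ∑ i ∈ t.getD v ∅,
    (s.getD (p.getD v 0) 0 i : ℝ) * eu i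

/-- `u(t,s)` : the maximum utility over all instances of `t` in `s` (`0` if none). -/
noncomputable def uSeq (eu : I → ℝ) (s : List (I →₀ ℕ)) (t : List (Finset I)) : ℝ :=
  sSup {x | ∃ p, IsInstance s t p ∧ x = uPos eu s t p}

/-- the greatest item of the last itemset of `t`, as an element of `WithBot I`. -/
def iLast (t : List (Finset I)) : WithBot I :=
  (t.getLast?.getD ∅).max

/-- `u_rest(t,k,s)` : remaining utility of `t` at extension position `k` in `s`. -/
def uRest (eu : I → ℝ) (s : List (I →₀ ℕ)) (t : List (Finset I)) (k : ℕ) : ℝ :=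
  ∑ j ∈ Finset.range s.length, ∑ i ∈ (s.getD j 0).support,
    if k < j ∨ (j = k ∧ iLast t < (i : WithBot I)) then (s.getD j 0 i : ℝ) * eu i else 0

/-- `k` is an extension position of `t` in `s`. -/
def ExtPos (s : List (I →₀ ℕ)) (t : List (Finset I)) (k : ℕ) : Prop :=
  ∃ p, IsInstance s t p ∧ p.getLast?.getD 0 = k

/-- the pivot : the least extension position of `t` in `s`. -/
noncomputable def pivot (s : List (I →₀ ℕ)) (t : List (Finset I)) : ℕ :=
  sInf {k | ExtPos s t k}

/-- `u_rest(t,s)` : remaining utility of `t` at the pivot. -/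
noncomputable def uRestSeq (eu : I → ℝ) (s : List (I →₀ ℕ)) (t : List (Finset I)) : ℝ :=
  uRest eu s t (pivot s t)

/-- `PEU(t,p,s)`. -/
noncomputable def PEUpos (eu : I → ℝ) (s : List (I →₀ ℕ)) (t : List (Finset I))
    (p : List ℕ) : ℝ :=
  if 0 < uRest eu s t (p.getLast?.getD 0) then
    uPos eu s t p + uRest eu s t (p.getLast?.getD 0)
  else 0

/-- `PEU(t,s)` : maximum of `PEU(t,p,s)` over all instances. -/
noncomputable def PEUseq (eu : I → ℝ) (s : List (I →₀ ℕ)) (t : List (Finset I)) : ℝ :=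
  sSup {x | ∃ p, IsInstance s t p ∧ x = PEUpos eu s t p}

/-- `t'` is an extension-prefix of `t` : `t' = ⟨X₁,…,X_{r−1}, X'_r⟩` where
`X'_r` is a nonempty lower segment of `X_r`. -/
def ExtPrefix (t' t : List (Finset I)) : Prop :=
  t' ≠ [] ∧ t'.length ≤ t.length ∧
    (∀ v, v + 1 < t'.length → t'.getD v ∅ = t.getD v ∅) ∧
    (t'.getD (t'.length - 1) ∅).Nonempty ∧
    t'.getD (t'.length - 1) ∅ ⊆ t.getD (t'.length - 1) ∅ ∧
    ∀ a ∈ t.getD (t'.length - 1) ∅ \ t'.getD (t'.length - 1) ∅,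
      ∀ b ∈ t'.getD (t'.length - 1) ∅, b < a

/-- `t'` is a proper extension-prefix of `t`. -/
def ProperExtPrefix (t' t : List (Finset I)) : Prop :=
  ExtPrefix t' t ∧ t' ≠ t

/-- the length (total number of item occurrences) of a sequence. -/
def seqLen (t : List (Finset I)) : ℕ :=
  (t.map Finset.card).sum

/-- remove the greatest item from a finite itemset. -/
def delMax (X : Finset I) : Finset I :=
  X.filter fun i => (i : WithBot I) ≠ X.max

/-- the parent of a sequence: delete the greatest item of the last itemset
(dropping that itemset entirely if it becomes empty). -/
def parent (t : List (Finset I)) : List (Finset I) :=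
  match t.getLast? with
  | none => []
  | some X => if delMax X = ∅ then t.dropLast else t.dropLast ++ [delMax X]

/-- `u(s)` : utility of a whole q-sequence. -/
def uQ (eu : I → ℝ) (s : List (I →₀ ℕ)) : ℝ :=
  ∑ j ∈ Finset.range s.length, ∑ i ∈ (s.getD j 0).support,
    (s.getD j 0 i : ℝ) * eu i

/-- `u(t)` : utility of `t` in a database `D`. -/
noncomputable def uDB (eu : I → ℝ) (D : Multiset (List (I →₀ ℕ)))
    (t : List (Finset I)) : ℝ :=
  (D.map fun s => if Contains s t then uSeq eu s t else 0).sum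

/-- `PEU(t)` over a database. -/
noncomputable def PEUDB (eu : I → ℝ) (D : Multiset (List (I →₀ ℕ)))
    (t : List (Finset I)) : ℝ :=
  (D.map fun s => if Contains s t then PEUseq eu s t else 0).sum

/-- `RSU(t,s)`. -/
noncomputable def RSUseq (eu : I → ℝ) (s : List (I →₀ ℕ)) (t : List (Finset I)) : ℝ :=
  if Contains s t then PEUseq eu s (parent t) else 0

/-- `RSU(t)` over a database. -/
noncomputable def RSUDB (eu : I → ℝ) (D : Multiset (List (I →₀ ℕ)))
    (t : List (Finset I)) : ℝ :=
  (D.map fun s => RSUseq eu s t).sum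

/-- `SWU(t)` over a database. -/
noncomputable def SWUDB (eu : I → ℝ) (D : Multiset (List (I →₀ ℕ)))
    (t : List (Finset I)) : ℝ :=
  (D.map fun s => if Contains s t then uQ eu s else 0).sum

/-- `SEU(t)` over a database. -/
noncomputable def SEUDB (eu : I → ℝ) (D : Multiset (List (I →₀ ℕ)))
    (t : List (Finset I)) : ℝ :=
  (D.map fun s => if Contains s t then uSeq eu s t + uRestSeq eu s t else 0).sum

/-- `t' ⊴ t` : `t'` is a subsequence of `t`. -/
def Subseq (t' t : List (Finset I)) : Prop :=
  ∃ p : List ℕ, p.length = t'.length ∧ p.Chain' (· < ·) ∧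
    ∀ v < t'.length, p.getD v 0 < t.length ∧ t'.getD v ∅ ⊆ t.getD (p.getD v 0) ∅

/-- `t` is a top-k HUSP with respect to the candidate set `C`. -/
def IsTopK (eu : I → ℝ) (D : Multiset (List (I →₀ ℕ))) (k : ℕ)
    (C : Finset (List (Finset I))) (t : List (Finset I)) : Prop :=
  t ∈ C ∧ (C.filter fun r => uDB eu D t < uDB eu D r).card < k

section Aux

lemma getD_lt_getD {p : List ℕ} (hchain : p.Chain' (· < ·)) {a b : ℕ}
    (hab : a < b) (hb : b < p.length) : p.getD a 0 < p.getD b 0 := by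
  rw [List.getD_eq_getElem _ _ (lt_trans hab hb), List.getD_eq_getElem _ _ hb]
  exact List.pairwise_iff_getElem.mp (List.isChain_iff_pairwise.mp hchain) a b _ hb hab

lemma getLast?_getD' {α : Type*} (l : List α) (d : α) :
    l.getLast?.getD d = l.getD (l.length - 1) d := by
  rw [List.getLast?_eq_getElem?, List.getD_eq_getElem?_getD]

/-- summing a nonnegative function over distinct positions of an increasing list
is at most summing it over the whole range. -/
lemma sum_getD_le (p : List ℕ) (hchain : p.Chain' (· < ·)) (m n : ℕ)
    (hlen : m ≤ p.length) (hlt : ∀ v < m, p.getD v 0 < n)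
    (h : ℕ → ℝ) (hh : ∀ j, 0 ≤ h j) (V : Finset ℕ) (hV : V ⊆ Finset.range m) :
    ∑ v ∈ V, h (p.getD v 0) ≤ ∑ j ∈ Finset.range n, h j := by
  have hinj : ∀ a ∈ V, ∀ b ∈ V, p.getD a 0 = p.getD b 0 → a = b := by
    intro a ha b hb hab
    by_contra hne
    rcases lt_or_gt_of_ne hne with hlt' | hlt'
    · exact absurd hab
        (ne_of_lt (getD_lt_getD hchain hlt' (lt_of_lt_of_le (Finset.mem_range.mp (hV hb)) hlen)))
    · exact absurd hab.symm
        (ne_of_lt (getD_lt_getD hchain hlt' (lt_of_lt_of_le (Finset.mem_range.mp (hV ha)) hlen)))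
  calc ∑ v ∈ V, h (p.getD v 0)
      = ∑ j ∈ V.image (fun v => p.getD v 0), h j := (Finset.sum_image hinj).symm
    _ ≤ ∑ j ∈ Finset.range n, h j := ?_
  apply Finset.sum_le_sum_of_subset_of_nonneg
  · intro j hj
    simp only [Finset.mem_image] at hj
    obtain ⟨v, hv, rfl⟩ := hj
    exact Finset.mem_range.mpr (hlt v (Finset.mem_range.mp (hV hv)))
  · intro j _ _; exact hh j

variable (eu : I → ℝ) (s : List (I →₀ ℕ))

lemma uQ_nonneg (heu : ∀ i, 0 < eu i) : 0 ≤ uQ eu s := by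
  apply Finset.sum_nonneg; intro j _
  apply Finset.sum_nonneg; intro i _
  exact mul_nonneg (Nat.cast_nonneg _) (heu i).le

lemma uRest_le_uQ (heu : ∀ i, 0 < eu i) (t : List (Finset I)) (k : ℕ) :
    uRest eu s t k ≤ uQ eu s := by
  apply Finset.sum_le_sum; intro j _
  apply Finset.sum_le_sum; intro i _
  split
  · exact le_rfl
  · exact mul_nonneg (Nat.cast_nonneg _) (heu i).le

lemma uPos_le_uQ (heu : ∀ i, 0 < eu i) (t : List (Finset I)) (p : List ℕ)
    (hp : IsInstance s t p) : uPos eu s t p ≤ uQ eu s := by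
  obtain ⟨hplen, hchain, hmem⟩ := hp
  have h0 : ℕ → ℝ := fun j => 0
  calc uPos eu s t p
      ≤ ∑ v ∈ Finset.range t.length,
          ∑ i ∈ (s.getD (p.getD v 0) 0).support, (s.getD (p.getD v 0) 0 i : ℝ) * eu i := by
        apply Finset.sum_le_sum; intro v hv
        apply Finset.sum_le_sum_of_subset_of_nonneg
        · intro i hi
          exact Finsupp.mem_support_iff.mpr ((hmem v (Finset.mem_range.mp hv)).2 i hi).ne'
        · intro i _ _; exact mul_nonneg (Nat.cast_nonneg _) (heu i).le
    _ ≤ uQ eu s := by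
        apply sum_getD_le p hchain t.length s.length hplen.ge
          (fun v hv => (hmem v hv).1)
          (fun j => ∑ i ∈ (s.getD j 0).support, (s.getD j 0 i : ℝ) * eu i)
          (fun j => Finset.sum_nonneg fun i _ => mul_nonneg (Nat.cast_nonneg _) (heu i).le)
          _ le_rfl

lemma PEUpos_nonneg (heu : ∀ i, 0 < eu i) (t : List (Finset I)) (p : List ℕ) :
    0 ≤ PEUpos eu s t p := by
  unfold PEUpos
  split
  · refine add_nonneg ?_ (by linarith)
    apply Finset.sum_nonneg; intro v _
    apply Finset.sum_nonneg; intro i _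
    exact mul_nonneg (Nat.cast_nonneg _) (heu i).le
  · exact le_rfl

lemma PEUseq_nonneg (heu : ∀ i, 0 < eu i) (t : List (Finset I)) :
    0 ≤ PEUseq eu s t :=
  Real.sSup_nonneg (by rintro x ⟨p, _, rfl⟩; exact PEUpos_nonneg eu s heu t p)

lemma bddAbove_PEU (heu : ∀ i, 0 < eu i) (t : List (Finset I)) :
    BddAbove {x | ∃ p, IsInstance s t p ∧ x = PEUpos eu s t p} := by
  refine ⟨uQ eu s + uQ eu s, ?_⟩
  rintro x ⟨p, hp, rfl⟩
  unfold PEUpos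
  split
  · exact add_le_add (uPos_le_uQ eu s heu t p hp) (uRest_le_uQ eu s heu t _)
  · exact add_nonneg (uQ_nonneg eu s heu) (uQ_nonneg eu s heu)

/-- the per-sequence key lemma. -/
lemma key_seq (heu : ∀ i, 0 < eu i) (t t' : List (Finset I))
    (ht : ∀ X ∈ t, X.Nonempty) (hpre : ProperExtPrefix t' t) :
    (if Contains s t then uSeq eu s t else 0) ≤
      (if Contains s t' then PEUseq eu s t' else 0) := by
  obtain ⟨⟨hne, hlenle, heqv, hX'ne, hsub, hgt⟩, hnet⟩ := hpre
  set r := t'.length with hrdef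
  set m := t.length with hmdef
  have hr1 : 1 ≤ r := List.length_pos_iff.mpr hne
  -- the main construction: from any instance of `t`, produce an instance of `t'`
  -- whose PEU dominates.
  have main : ∀ p, IsInstance s t p →
      ∃ p', IsInstance s t' p' ∧ uPos eu s t p ≤ PEUpos eu s t' p' := by
    intro p hp
    obtain ⟨hplen, hchain, hmem⟩ := hp
    set p' := p.take r with hp'def
    have hp'len : p'.length = r := by
      rw [hp'def, List.length_take]; omega
    have hp'getD : ∀ v < r, p'.getD v 0 = p.getD v 0 := by
      intro v hv
      rw [List.getD_eq_getElem _ _ (by omega : v < p'.length),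
        List.getD_eq_getElem _ _ (by omega : v < p.length)]
      exact List.getElem_take
    have hp'chain : p'.Chain' (· < ·) := hchain.prefix (List.take_prefix r p)
    set k := p.getD (r - 1) 0 with hkdef
    have hkn : k < s.length := (hmem (r - 1) (by omega)).1
    have hinst' : IsInstance s t' p' := by
      refine ⟨by rw [hp'len], hp'chain, ?_⟩
      intro v hv
      have hv' : v < m := lt_of_lt_of_le hv hlenle
      refine ⟨by rw [hp'getD v hv]; exact (hmem v hv').1, ?_⟩
      intro i hi
      rw [hp'getD v hv]
      rcases eq_or_lt_of_le (Nat.succ_le_of_lt hv) with hveq | hvlt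
      · have hv1 : v = r - 1 := by omega
        have hi' : i ∈ t.getD v ∅ := by
          rw [hv1]; exact hsub (hv1 ▸ hi)
        exact (hmem v hv').2 i hi'
      · exact (hmem v hv').2 i ((heqv v hvlt) ▸ hi)
    have hlast : p'.getLast?.getD 0 = k := by
      rw [getLast?_getD', hp'len, hp'getD (r - 1) (by omega)]
    have hiLast : iLast t' = (t'.getD (r - 1) ∅).max := by
      unfold iLast
      rw [getLast?_getD']
    have hcond_diff : ∀ i ∈ t.getD (r - 1) ∅ \ t'.getD (r - 1) ∅,
        iLast t' < (i : WithBot I) := by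
      intro i hi
      obtain ⟨b, hb⟩ := Finset.max_of_nonempty hX'ne
      rw [hiLast, hb]
      exact_mod_cast hgt i hi b (Finset.mem_of_max hb)
    -- abbreviations
    set F : ℕ → I → ℝ := fun j i => (s.getD j 0 i : ℝ) * eu i with hFdef
    have hFnn : ∀ j i, 0 ≤ F j i := fun j i => mul_nonneg (Nat.cast_nonneg _) (heu i).le
    set g : ℕ → ℝ := fun v => ∑ i ∈ t.getD v ∅, F (p.getD v 0) i with hgdef
    set h : ℕ → ℝ := fun j => ∑ i ∈ (s.getD j 0).support,
      if k < j ∨ (j = k ∧ iLast t' < (i : WithBot I)) then F j i else 0 with hhdef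
    have hh_nn : ∀ j, 0 ≤ h j := by
      intro j; apply Finset.sum_nonneg; intro i _
      split
      · exact hFnn j i
      · exact le_rfl
    have huRest : uRest eu s t' k = ∑ j ∈ Finset.range s.length, h j := rfl
    have hr' : r - 1 + 1 = r := by omega
    -- decomposition of uPos t p
    have hsplit : uPos eu s t p
        = (∑ v ∈ Finset.range r, g v) + ∑ v ∈ Finset.Ico r m, g v := by
      show (∑ v ∈ Finset.range m, g v) = _
      rw [Finset.range_eq_Ico, ← Finset.sum_Ico_consecutive _ (Nat.zero_le r) hlenle,
        ← Finset.range_eq_Ico]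
    have hsplit2 : (∑ v ∈ Finset.range r, g v)
        = ∑ v ∈ Finset.range (r - 1), g v + g (r - 1) := by
      have := Finset.sum_range_succ g (r - 1)
      rwa [hr'] at this
    have hgr : g (r - 1) = ∑ i ∈ t'.getD (r - 1) ∅, F k i
        + ∑ i ∈ (t.getD (r - 1) ∅ \ t'.getD (r - 1) ∅), F k i := by
      have := Finset.sum_sdiff (f := F k) hsub
      show (∑ i ∈ t.getD (r - 1) ∅, F k i) = _
      linarith
    have huPos' : uPos eu s t' p'
        = ∑ v ∈ Finset.range (r - 1), g v + ∑ i ∈ t'.getD (r - 1) ∅, F k i := by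
      show (∑ v ∈ Finset.range r, ∑ i ∈ t'.getD v ∅, F (p'.getD v 0) i) = _
      have e1 := Finset.sum_range_succ (fun v => ∑ i ∈ t'.getD v ∅, F (p'.getD v 0) i) (r - 1)
      rw [hr'] at e1
      rw [e1]
      congr 1
      · apply Finset.sum_congr rfl
        intro v hv
        have hv' : v < r - 1 := Finset.mem_range.mp hv
        rw [heqv v (by omega), hp'getD v (by omega)]
      · rw [hp'getD (r - 1) (by omega)]
    have hdecomp : uPos eu s t p = uPos eu s t' p'
        + ((∑ i ∈ (t.getD (r - 1) ∅ \ t'.getD (r - 1) ∅), F k i)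
          + ∑ v ∈ Finset.Ico r m, g v) := by
      rw [hsplit, hsplit2, hgr, huPos']; ring
    -- bounding the remainder by uRest
    have hclaim1 : (∑ i ∈ (t.getD (r - 1) ∅ \ t'.getD (r - 1) ∅), F k i) ≤ h k := by
      have e : ∀ i ∈ (t.getD (r - 1) ∅ \ t'.getD (r - 1) ∅),
          F k i = if k < k ∨ (k = k ∧ iLast t' < (i : WithBot I)) then F k i else 0 := by
        intro i hi
        rw [if_pos (Or.inr ⟨rfl, hcond_diff i hi⟩)]
      rw [Finset.sum_congr rfl e]
      apply Finset.sum_le_sum_of_subset_of_nonneg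
      · intro i hi
        have hi' : i ∈ t.getD (r - 1) ∅ := (Finset.mem_sdiff.mp hi).1
        exact Finsupp.mem_support_iff.mpr ((hmem (r - 1) (by omega)).2 i hi').ne'
      · intro i _ _
        split
        · exact hFnn k i
        · exact le_rfl
    have hclaim2 : ∀ v ∈ Finset.Ico r m, g v ≤ h (p.getD v 0) := by
      intro v hv
      obtain ⟨hv1, hv2⟩ := Finset.mem_Ico.mp hv
      have hkv : k < p.getD v 0 :=
        getD_lt_getD hchain (by omega : r - 1 < v) (by omega : v < p.length)
      have e : ∀ i ∈ t.getD v ∅, F (p.getD v 0) i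
          = if k < p.getD v 0 ∨ (p.getD v 0 = k ∧ iLast t' < (i : WithBot I))
            then F (p.getD v 0) i else 0 := by
        intro i _
        rw [if_pos (Or.inl hkv)]
      show (∑ i ∈ t.getD v ∅, F (p.getD v 0) i) ≤ _
      rw [Finset.sum_congr rfl e]
      apply Finset.sum_le_sum_of_subset_of_nonneg
      · intro i hi
        exact Finsupp.mem_support_iff.mpr ((hmem v hv2).2 i hi).ne'
      · intro i _ _
        split
        · exact hFnn _ i
        · exact le_rfl
    have hclaim3 : h k + ∑ v ∈ Finset.Ico r m, h (p.getD v 0)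
        ≤ ∑ j ∈ Finset.range s.length, h j := by
      have hW : (r - 1) ∉ Finset.Ico r m := by
        simp only [Finset.mem_Ico, not_and, not_lt]
        omega
      have e := Finset.sum_insert (f := fun v => h (p.getD v 0)) hW
      calc h k + ∑ v ∈ Finset.Ico r m, h (p.getD v 0)
          = ∑ v ∈ insert (r - 1) (Finset.Ico r m), h (p.getD v 0) := e.symm
        _ ≤ ∑ j ∈ Finset.range s.length, h j := by
            apply sum_getD_le p hchain m s.length hplen.ge (fun v hv => (hmem v hv).1) h hh_nn
            intro v hv
            rcases Finset.mem_insert.mp hv with hv | hv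
            · exact Finset.mem_range.mpr (by omega)
            · obtain ⟨_, h2⟩ := Finset.mem_Ico.mp hv
              exact Finset.mem_range.mpr h2
    have hRle : (∑ i ∈ (t.getD (r - 1) ∅ \ t'.getD (r - 1) ∅), F k i)
        + ∑ v ∈ Finset.Ico r m, g v ≤ uRest eu s t' k := by
      rw [huRest]
      calc _ ≤ h k + ∑ v ∈ Finset.Ico r m, h (p.getD v 0) :=
            add_le_add hclaim1 (Finset.sum_le_sum hclaim2)
        _ ≤ _ := hclaim3
    -- positivity of uRest
    have hcases : r < m ∨ (t.getD (r - 1) ∅ \ t'.getD (r - 1) ∅).Nonempty := by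
      by_contra hq
      push_neg at hq
      obtain ⟨h1, h2⟩ := hq
      have hrm : r = m := by omega
      have hdiff : t.getD (r - 1) ∅ \ t'.getD (r - 1) ∅ = ∅ :=
        h2
      apply hnet
      apply List.ext_getElem (by omega)
      intro v hv1 hv2
      rw [← List.getD_eq_getElem t' ∅ hv1, ← List.getD_eq_getElem t ∅ hv2]
      rcases lt_or_ge (v + 1) r with hvr | hvr
      · exact heqv v hvr
      · have hv1' : v = r - 1 := by omega
        subst hv1'
        exact Finset.Subset.antisymm hsub (Finset.sdiff_eq_empty_iff_subset.mp hdiff)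
    have hpos : 0 < uRest eu s t' k := by
      obtain ⟨j₀, i₀, hj₀n, hi₀supp, hcond⟩ :
          ∃ j₀ i₀, j₀ < s.length ∧ i₀ ∈ (s.getD j₀ 0).support ∧
            (k < j₀ ∨ (j₀ = k ∧ iLast t' < (i₀ : WithBot I))) := by
        rcases hcases with hcase | hcase
        · have htr : t.getD r ∅ ∈ t := by
            rw [List.getD_eq_getElem _ _ (by omega : r < t.length)]
            exact List.getElem_mem _
          obtain ⟨i₀, hi₀⟩ := ht _ htr
          refine ⟨p.getD r 0, i₀, (hmem r hcase).1, ?_, Or.inl ?_⟩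
          · exact Finsupp.mem_support_iff.mpr ((hmem r hcase).2 i₀ hi₀).ne'
          · exact getD_lt_getD hchain (by omega : r - 1 < r) (by omega : r < p.length)
        · obtain ⟨i₀, hi₀⟩ := hcase
          have hi₀' : i₀ ∈ t.getD (r - 1) ∅ := (Finset.mem_sdiff.mp hi₀).1
          refine ⟨k, i₀, hkn, ?_, Or.inr ⟨rfl, hcond_diff i₀ hi₀⟩⟩
          exact Finsupp.mem_support_iff.mpr ((hmem (r - 1) (by omega)).2 i₀ hi₀').ne'
      have hFpos : 0 < F j₀ i₀ := by
        apply mul_pos _ (heu i₀)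
        exact_mod_cast Nat.pos_of_ne_zero (Finsupp.mem_support_iff.mp hi₀supp)
      have h1 : F j₀ i₀ ≤ h j₀ := by
        have hnn : ∀ i ∈ (s.getD j₀ 0).support,
            (0:ℝ) ≤ if k < j₀ ∨ (j₀ = k ∧ iLast t' < (i : WithBot I)) then F j₀ i else 0 := by
          intro i _
          split
          · exact hFnn j₀ i
          · exact le_rfl
        calc F j₀ i₀
            = (if k < j₀ ∨ (j₀ = k ∧ iLast t' < (i₀ : WithBot I)) then F j₀ i₀ else 0) :=
              (if_pos hcond).symm
          _ ≤ h j₀ := Finset.single_le_sum hnn hi₀supp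
      have h2 : h j₀ ≤ uRest eu s t' k := by
        rw [huRest]
        exact Finset.single_le_sum (fun j _ => hh_nn j) (Finset.mem_range.mpr hj₀n)
      linarith
    refine ⟨p', hinst', ?_⟩
    have : PEUpos eu s t' p' = uPos eu s t' p' + uRest eu s t' k := by
      unfold PEUpos
      rw [hlast, if_pos hpos]
    rw [this, hdecomp]
    have huPosnn := hRle
    linarith
  -- conclude
  by_cases hc : Contains s t
  · obtain ⟨p₀, hp₀⟩ := hc
    obtain ⟨p₀', hp₀', _⟩ := main p₀ hp₀
    have hc' : Contains s t' := ⟨p₀', hp₀'⟩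
    rw [if_pos ⟨p₀, hp₀⟩, if_pos hc']
    apply Real.sSup_le _ (PEUseq_nonneg eu s heu t')
    rintro x ⟨p, hp, rfl⟩
    obtain ⟨p', hp', hle⟩ := main p hp
    exact hle.trans (le_csSup (bddAbove_PEU eu s heu t') ⟨p', hp', rfl⟩)
  · rw [if_neg hc]
    split
    · exact PEUseq_nonneg eu s heu t'
    · exact le_rfl

end Aux

/-- Theorem 1, PEU upper bound: `u(t) ≤ PEU(t')` over a database,
for a proper extension-prefix `t'` of `t`. -/
theorem uDB_le_PEUDB_of_properExtPrefix
    (eu : I → ℝ) (heu : ∀ i, 0 < eu i)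
    (D : Multiset (List (I →₀ ℕ)))
    (t t' : List (Finset I))
    (ht : ∀ X ∈ t, X.Nonempty) (ht' : ∀ X ∈ t', X.Nonempty)
    (hpre : ProperExtPrefix t' t) :
    uDB eu D t ≤ PEUDB eu D t' := by
  unfold uDB PEUDB
  apply Multiset.sum_map_le_sum_map
  intro s _
  exact key_seq eu s heu t t' ht hpre

end TKUS
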